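/- arXiv:2501.04720 — 11 statements merged into one kernel-verified Lean document; each statement's English description precedes it below -/
import Mathlib

section
/- Let R be a ΔU ring. Then: (1) the sum of any two units of R lies in Δ(R); (2) every unit of R is uniquely clean, in the sense that whenever a unit u of R is written as u = e + v with e an idempotent and v a unit, necessarily e = 0 (and v = u); (3) the only idempotent of R that can be written as a sum of two units of R is 0. -/
/-!
Δ(R) is closed under addition and negation, and a ΔU ring has `2 = -((-1) - 1) ∈ Δ(R)`; hence
`u + v = (u - 1) + (v - 1) + 2 ∈ Δ(R)` for all units `u, v`. An idempotent `e ∈ Δ(R)` vanishes, since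
`e - 1` is then a unit and `e (e - 1) = 0`. If `u = e + v` then `e = u + (-v)` is a sum of two units.
-/

/-- `Δ(R) = {r ∈ R : r + u is a unit for every unit u of R}`. -/
def Delta (R : Type*) [Ring R] : Set R := {r : R | ∀ u : Rˣ, IsUnit (r + (u : R))}

/-- A ring `R` is a ΔU ring if every unit `u` satisfies `u - 1 ∈ Δ(R)`. -/
def IsDeltaU (R : Type*) [Ring R] : Prop := ∀ u : Rˣ, (u : R) - 1 ∈ Delta R

section

variable {R : Type*} [Ring R]

theorem Delta.add_mem {a b : R} (ha : a ∈ Delta R) (hb : b ∈ Delta R) : a + b ∈ Delta R := by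
  intro u
  obtain ⟨w, hw⟩ := hb u
  simpa only [add_assoc, hw] using ha w

theorem Delta.neg_mem {a : R} (ha : a ∈ Delta R) : -a ∈ Delta R := by
  intro u
  simpa only [neg_add, Units.val_neg, neg_neg] using (ha (-u)).neg

theorem IsIdempotentElem.eq_zero_of_mem_delta {e : R} (he : IsIdempotentElem e)
    (hd : e ∈ Delta R) : e = 0 := by
  have hunit : IsUnit (e - 1) := by
    simpa only [Units.val_neg, Units.val_one, sub_eq_add_neg] using hd (-1)
  refine hunit.mul_left_eq_zero.mp ?_
  rw [mul_sub, he.eq, mul_one, sub_self]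

theorem IsDeltaU.two_mem_delta (hR : IsDeltaU R) : (2 : R) ∈ Delta R := by
  convert Delta.neg_mem (hR (-1)) using 1
  push_cast
  norm_num

theorem IsDeltaU.units_add_mem_delta (hR : IsDeltaU R) (u v : Rˣ) :
    (u : R) + v ∈ Delta R := by
  convert Delta.add_mem (Delta.add_mem (hR u) (hR v)) hR.two_mem_delta using 1
  rw [← one_add_one_eq_two]
  abel

end

theorem deltaU_unit_sum_and_uniquely_clean (R : Type*) [Ring R] (hR : IsDeltaU R) :
    (∀ u v : Rˣ, ((u : R) + (v : R)) ∈ Delta R) ∧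
    (∀ (u v : Rˣ) (e : R), e * e = e → (u : R) = e + (v : R) → e = 0 ∧ (v : R) = (u : R)) ∧
    (∀ e : R, e * e = e → (∃ u v : Rˣ, e = (u : R) + (v : R)) → e = 0) := by
  refine ⟨hR.units_add_mem_delta, fun u v e he huv => ?_, fun e he ⟨u, v, huv⟩ => ?_⟩
  · have he_sum : e = (u : R) + ((-v : Rˣ) : R) := by
      rw [Units.val_neg, huv]
      abel
    have he0 : e = 0 :=
      IsIdempotentElem.eq_zero_of_mem_delta he (he_sum ▸ hR.units_add_mem_delta u (-v))
    exact ⟨he0, by rw [huv, he0, zero_add]⟩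
  · exact IsIdempotentElem.eq_zero_of_mem_delta he (huv ▸ hR.units_add_mem_delta u v)
end

section
/- Let R be a von Neumann regular ring. The following are equivalent: (i) R is a ΔU ring; (ii) R is a UJ ring; (iii) R is a UU ring; (iv) R is a Boolean ring (x² = x for all x ∈ R). -/
/-!
In a von Neumann regular ring each of (i)–(iii) forces `1` to be the only unit, and a regular ring
whose only unit is `1` is Boolean: it is reduced (`1 + n` is a unit for nilpotent `n`), so its
idempotents are central, so for `a = a x a` the element `a + (1 - a x)` is a unit, hence `1`, and
`a = a x` is idempotent.

For (ii) and (i) this is `J(R) = 0` and `Δ(R) = 0`. An idempotent in `J(R)` vanishes, and `x a` is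
idempotent. If `r ∈ Δ(R)`, then `c = 1 + r` plus any square-zero element is a unit; with the
square-zero elements `g z (1 - g)`, `g` idempotent, Jacobson's lemma puts `(1 - g) c⁻¹ g` in
`J(R) = 0`. So `r` commutes with all idempotents, `v = r + (1 - r x)` is a unit, and so is
`r - v = r x - 1`, which kills the idempotent `r x`.

For (iii), `-2 = (-1) - 1` is a central nilpotent, hence `2 = 0`. If `a² = 0`, regularity yields
`s` with `s² = 0`, `a s a = a`, `s a s = s`: matrix units of a `2 × 2` corner in which
`(1 + a)(1 + s)` is `[[1, 1], [1, 0]]`, of order 3 in characteristic 2. So the nilpotent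
`(1 + a)(1 + s) - 1` has as cube the idempotent `a s + s a`, which must vanish, and `a = 0`.
-/

def IsVonNeumannRegular (R : Type*) [Ring R] : Prop := ∀ a : R, ∃ x : R, a = a * x * a

section Ring

variable {R : Type*} [Ring R]

theorem isIdempotentElem_mul_of_mul_mul_eq {a x : R} (h : a * x * a = a) :
    IsIdempotentElem (a * x) := by
  rw [IsIdempotentElem, ← mul_assoc, h]

theorem isIdempotentElem_mul_of_mul_mul_eq' {a x : R} (h : a * x * a = a) :
    IsIdempotentElem (x * a) := by
  rw [IsIdempotentElem, mul_assoc, ← mul_assoc a, h]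

theorem IsIdempotentElem.eq_zero_of_isUnit_one_sub {e : R} (he : IsIdempotentElem e)
    (hu : IsUnit (1 - e)) : e = 0 := by
  simpa using (IsIdempotentElem.iff_eq_one_of_isUnit hu).1 he.one_sub

theorem IsIdempotentElem.eq_zero_of_mem_jacobson_bot {e : R} (he : IsIdempotentElem e)
    (hJ : e ∈ Ideal.jacobson (⊥ : Ideal R)) : e = 0 := by
  obtain ⟨z, hz⟩ := Ideal.mem_jacobson_iff.1 hJ (-1)
  rw [Submodule.mem_bot, sub_eq_zero] at hz
  have hz : z * (1 - e) = 1 :=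
    calc z * (1 - e) = z * -1 * e + z := by noncomm_ring
      _ = 1 := hz
  rw [← one_mul e, ← hz, mul_assoc, he.one_sub_mul_self, mul_zero]

theorem IsIdempotentElem.mul_mul_one_sub_mul_mul_one_sub {g : R} (hg : IsIdempotentElem g)
    (a b : R) : g * a * (1 - g) * (g * b * (1 - g)) = 0 := by
  rw [mul_assoc, ← mul_assoc (1 - g), ← mul_assoc (1 - g), hg.one_sub_mul_self, zero_mul,
    zero_mul, mul_zero]

theorem commute_of_mul_mul_one_sub_eq_zero {g a : R} (h₁ : g * a * (1 - g) = 0)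
    (h₂ : (1 - g) * a * g = 0) : Commute a g :=
  calc a * g = g * a * g + (1 - g) * a * g := by noncomm_ring
    _ = g * a * g + g * a * (1 - g) := by rw [h₁, h₂]
    _ = g * a := by noncomm_ring

theorem isReduced_of_subsingleton_units [Subsingleton Rˣ] : IsReduced R :=
  ⟨fun _ hn => by simpa using hn.isUnit_one_add.eq_one⟩

theorem IsIdempotentElem.commute_of_isReduced [IsReduced R] {g : R} (hg : IsIdempotentElem g)
    (a : R) : Commute a g := by
  refine commute_of_mul_mul_one_sub_eq_zero (IsNilpotent.eq_zero ⟨2, ?_⟩)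
    (IsNilpotent.eq_zero ⟨2, ?_⟩)
  · rw [sq, hg.mul_mul_one_sub_mul_mul_one_sub]
  · simpa only [sq, sub_sub_cancel] using hg.one_sub.mul_mul_one_sub_mul_mul_one_sub a a

theorem isUnit_add_one_sub_of_corner {a e w : R} (he : IsIdempotentElem e) (hae : a * e = a)
    (hea : e * a = a) (haw : a * w = e) (hwa : w * a = e) (hew : e * w = w) (hwe : w * e = w) :
    IsUnit (a + (1 - e)) := by
  refine ⟨⟨a + (1 - e), w + (1 - e), ?_, ?_⟩, rfl⟩
  · calc (a + (1 - e)) * (w + (1 - e))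
        = a * w + (a - a * e) + (w - e * w) + (e * e - e) + (1 - e) := by noncomm_ring
      _ = 1 := by rw [haw, hae, hew, he.eq]; abel
  · calc (w + (1 - e)) * (a + (1 - e))
        = w * a + (w - w * e) + (a - e * a) + (e * e - e) + (1 - e) := by noncomm_ring
      _ = 1 := by rw [hwa, hwe, hea, he.eq]; abel

theorem isUnit_add_one_sub_mul {a x : R} (h : a * x * a = a) (hax : Commute a (a * x))
    (hxa : Commute a (x * a)) : IsUnit (a + (1 - a * x)) := by
  have hxa_eq : x * a = a * x :=
    calc x * a = x * (a * (a * x)) := by rw [hax.eq, h]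
      _ = a * (x * a) * x := by rw [hxa.eq]; noncomm_ring
      _ = a * x := by rw [← mul_assoc, h]
  refine isUnit_add_one_sub_of_corner (w := x * a * x) (isIdempotentElem_mul_of_mul_mul_eq h)
    (by rw [hax.eq, h]) h (by rw [← mul_assoc, ← mul_assoc, h])
    (by rw [show x * a * x * a = x * (a * x * a) by noncomm_ring, h, hxa_eq]) ?_
    (by rw [show x * a * x * (a * x) = x * (a * x * a) * x by noncomm_ring, h])
  calc a * x * (x * a * x) = a * x * (a * x) * x := by rw [hxa_eq]; noncomm_ring
    _ = x * a * x := by rw [← mul_assoc, h, hxa_eq]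

theorem IsUnit.one_add_mul_comm {a b : R} (h : IsUnit (1 + a * b)) : IsUnit (1 + b * a) := by
  have := (spectrum.unit_mem_mul_comm (R := ℤ) (a := -a) (b := b) (r := 1)).not
  simp only [neg_mul, Units.val_one, spectrum.mem_iff, algebraMap_int_eq, eq_intCast,
    Int.cast_one, sub_eq_add_neg, neg_neg, not_not, mul_neg] at this
  rwa [← this]

theorem mem_jacobson_bot_of_forall_isUnit {x : R} (h : ∀ y, IsUnit (1 + y * x)) :
    x ∈ Ideal.jacobson (⊥ : Ideal R) := by
  refine Ideal.mem_jacobson_iff.2 fun y => ⟨↑(h y).unit⁻¹, ?_⟩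
  rw [Submodule.mem_bot, mul_assoc, ← mul_add_one, add_comm (y * x), IsUnit.val_inv_mul,
    sub_self]

theorem mem_jacobson_bot_of_forall_isUnit_add {c : Rˣ} {g : R}
    (h : ∀ z, IsUnit ((c : R) + g * z * (1 - g))) :
    (1 - g) * ↑c⁻¹ * g ∈ Ideal.jacobson (⊥ : Ideal R) := by
  refine mem_jacobson_bot_of_forall_isUnit fun y => ?_
  rw [show y * ((1 - g) * ↑c⁻¹ * g) = y * (1 - g) * (↑c⁻¹ * g) by simp only [mul_assoc]]
  refine IsUnit.one_add_mul_comm ?_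
  rw [show 1 + ↑c⁻¹ * g * (y * (1 - g)) = ↑c⁻¹ * ((c : R) + g * y * (1 - g)) by
    rw [mul_add, Units.inv_mul]; noncomm_ring]
  exact c⁻¹.isUnit.mul (h y)

theorem isUnit_one_add_add_of_mem_delta {r : R} (hr : r ∈ Delta R) {n : R} (hn : n * n = 0) :
    IsUnit (1 + r + n) := by
  simpa [add_comm, add_left_comm] using hr ((IsNilpotent.isUnit_one_add ⟨2, by rw [sq, hn]⟩).unit)

theorem eq_zero_of_isNilpotent_one_add_mul_one_add_sub_one (h2 : (2 : R) = 0) {a s : R}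
    (ha : a * a = 0) (hs : s * s = 0) (hasa : a * s * a = a) (hsas : s * a * s = s)
    (hnil : IsNilpotent ((1 + a) * (1 + s) - 1)) : a = 0 := by
  have hdouble : ∀ t : R, t + t = 0 := fun t => by rw [← two_mul, h2, zero_mul]
  set m := (1 + a) * (1 + s) - 1 with hm
  have hm' : m = a + s + a * s := by rw [hm]; noncomm_ring
  have hm2 : m * m = a + s + s * a :=
    calc m * m = a * a + a * s + a * a * s + s * a + s * s + s * a * s + a * s * a
          + a * (s * s) + a * s * a * s := by rw [hm']; noncomm_ring
      _ = a + s + s * a + (a * s + a * s) := by rw [ha, hs, hasa, hsas]; noncomm_ring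
      _ = a + s + s * a := by rw [hdouble, add_zero]
  have hm3 : m * m * m = a * s + s * a :=
    calc m * m * m = a * a + a * s + a * a * s + s * a + s * s + s * a * s + s * (a * a)
          + s * a * s + s * (a * a) * s := by rw [hm2, hm']; noncomm_ring
      _ = a * s + s * a + (s + s) := by rw [ha, hs, hsas]; noncomm_ring
      _ = a * s + s * a := by rw [hdouble, add_zero]
  have hp : IsIdempotentElem (a * s + s * a) := by
    calc (a * s + s * a) * (a * s + s * a)
        = a * s * a * s + a * (s * s) * a + s * (a * a) * s + s * a * s * a := by noncomm_ring
      _ = a * s + s * a := by rw [hasa, hs, ha, hsas]; noncomm_ring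
  have hp0 : a * s + s * a = 0 := hp.eq_zero_of_isNilpotent <| by
    rw [← hm3, ← pow_three']; exact hnil.pow_succ 2
  calc a = (a * s + s * a) * a := by rw [add_mul, hasa, mul_assoc, ha, mul_zero, add_zero]
    _ = 0 := by rw [hp0, zero_mul]

end Ring

namespace IsVonNeumannRegular

variable {R : Type*} [Ring R]

theorem eq_zero_of_mem_jacobson (hR : IsVonNeumannRegular R) {a : R}
    (ha : a ∈ Ideal.jacobson (⊥ : Ideal R)) : a = 0 := by
  obtain ⟨x, hx⟩ := hR a
  have hxa : x * a = 0 := (isIdempotentElem_mul_of_mul_mul_eq' hx.symm).eq_zero_of_mem_jacobson_bot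
    (Ideal.mul_mem_left _ x ha)
  rw [hx, mul_assoc, hxa, mul_zero]

theorem commute_of_mem_delta (hR : IsVonNeumannRegular R) {r : R} (hr : r ∈ Delta R) {g : R}
    (hg : IsIdempotentElem g) : Commute r g := by
  obtain ⟨c, hc⟩ := hr 1
  have hcorner : ∀ g : R, IsIdempotentElem g → (1 - g) * ↑c⁻¹ * g = 0 := fun g hg =>
    hR.eq_zero_of_mem_jacobson <| mem_jacobson_bot_of_forall_isUnit_add fun z => by
      rw [hc, Units.val_one, add_comm r]
      exact isUnit_one_add_add_of_mem_delta hr (hg.mul_mul_one_sub_mul_mul_one_sub z z)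
  have hcg : Commute (↑c⁻¹ : R) g := commute_of_mul_mul_one_sub_eq_zero
    (by simpa only [sub_sub_cancel] using hcorner (1 - g) hg.one_sub) (hcorner g hg)
  have hrg := (Commute.units_inv_left_iff.1 hcg).sub_left (Commute.one_left g)
  rwa [hc, Units.val_one, add_sub_cancel_right] at hrg

theorem eq_zero_of_mem_delta (hR : IsVonNeumannRegular R) {r : R} (hr : r ∈ Delta R) : r = 0 := by
  obtain ⟨x, hx⟩ := hR r
  have he := isIdempotentElem_mul_of_mul_mul_eq hx.symm
  obtain ⟨v, hv⟩ := isUnit_add_one_sub_mul hx.symm (hR.commute_of_mem_delta hr he)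
    (hR.commute_of_mem_delta hr (isIdempotentElem_mul_of_mul_mul_eq' hx.symm))
  have hrx : r * x = 0 := he.eq_zero_of_isUnit_one_sub <| by
    have := (hr (-v)).neg
    rwa [Units.val_neg, hv, show -(r + -(r + (1 - r * x))) = 1 - r * x by abel] at this
  rw [hx, hrx, zero_mul]

theorem isIdempotentElem [Subsingleton Rˣ] (hR : IsVonNeumannRegular R) (a : R) :
    IsIdempotentElem a := by
  have := isReduced_of_subsingleton_units (R := R)
  obtain ⟨x, hx⟩ := hR a
  have hu1 : a + (1 - a * x) = 1 := (isUnit_add_one_sub_mul hx.symm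
    ((isIdempotentElem_mul_of_mul_mul_eq hx.symm).commute_of_isReduced a)
    ((isIdempotentElem_mul_of_mul_mul_eq' hx.symm).commute_of_isReduced a)).eq_one
  have hax : a * x = a :=
    calc a * x = a * x + (a + (1 - a * x)) - 1 := by rw [hu1, add_sub_cancel_right]
      _ = a := by abel
  calc a * a = a * x * a := by rw [hax]
    _ = a := hx.symm

theorem eq_zero_of_isNilpotent_of_commute (hR : IsVonNeumannRegular R) {a : R}
    (ha : IsNilpotent a) (hcomm : ∀ b, Commute a b) : a = 0 := by
  obtain ⟨x, hx⟩ := hR a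
  have hu : IsUnit (1 - x * a) := ((hcomm x).symm.isNilpotent_mul_left ha).isUnit_one_sub
  rw [← hu.mul_left_eq_zero, mul_sub, mul_one, ← mul_assoc, ← hx, sub_self]

theorem two_eq_zero (hR : IsVonNeumannRegular R) (hUU : ∀ u : Rˣ, IsNilpotent ((u : R) - 1)) :
    (2 : R) = 0 :=
  hR.eq_zero_of_isNilpotent_of_commute (by simpa [← neg_add', one_add_one_eq_two] using hUU (-1))
    (Commute.ofNat_left 2)

theorem exists_mul_mul_eq_self_of_mul_self_eq_zero (hR : IsVonNeumannRegular R) {a : R}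
    (ha : a * a = 0) : ∃ s, s * s = 0 ∧ a * s * a = a ∧ s * a * s = s := by
  obtain ⟨x, hx⟩ := hR a
  have he := isIdempotentElem_mul_of_mul_mul_eq hx.symm
  refine ⟨(1 - a * x) * x * (a * x), ?_, ?_, ?_⟩
  · calc (1 - a * x) * x * (a * x) * ((1 - a * x) * x * (a * x))
        = (1 - a * x) * x * (a * x * (1 - a * x)) * x * (a * x) := by noncomm_ring
      _ = 0 := by rw [he.mul_one_sub_self]; noncomm_ring
  · calc a * ((1 - a * x) * x * (a * x)) * a = (a - a * a * x) * x * (a * x * a) := by noncomm_ring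
      _ = a := by rw [ha, zero_mul, sub_zero, ← hx, ← hx]
  · calc (1 - a * x) * x * (a * x) * a * ((1 - a * x) * x * (a * x))
        = (1 - a * x) * x * (a * x * a) * (1 - a * x) * x * (a * x) := by noncomm_ring
      _ = (1 - a * x) * x * (a - a * a * x) * x * (a * x) := by rw [← hx]; noncomm_ring
      _ = (1 - a * x) * x * (a * x * (a * x)) := by rw [ha]; noncomm_ring
      _ = (1 - a * x) * x * (a * x) := by rw [he.eq]

theorem isReduced_of_forall_isNilpotent_sub_one (hR : IsVonNeumannRegular R)
    (hUU : ∀ u : Rˣ, IsNilpotent ((u : R) - 1)) : IsReduced R := by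
  refine (isReduced_iff_pow_one_lt 2 one_lt_two).2 fun a ha => ?_
  rw [sq] at ha
  obtain ⟨s, hs, hasa, hsas⟩ := hR.exists_mul_mul_eq_self_of_mul_self_eq_zero ha
  have hnil := hUU ((IsNilpotent.isUnit_one_add ⟨2, by rw [sq, ha]⟩).unit *
    (IsNilpotent.isUnit_one_add ⟨2, by rw [sq, hs]⟩).unit)
  rw [Units.val_mul, IsUnit.unit_spec, IsUnit.unit_spec] at hnil
  exact eq_zero_of_isNilpotent_one_add_mul_one_add_sub_one (hR.two_eq_zero hUU) ha hs hasa hsas hnil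

end IsVonNeumannRegular

theorem deltaU_tfae_of_regular (R : Type*) [Ring R]
    (hreg : ∀ a : R, ∃ x : R, a = a * x * a) :
    List.TFAE
      [IsDeltaU R,
       ∀ u : Rˣ, (u : R) - 1 ∈ Ideal.jacobson (⊥ : Ideal R),
       ∀ u : Rˣ, IsNilpotent ((u : R) - 1),
       ∀ x : R, x ^ 2 = x] := by
  have hR : IsVonNeumannRegular R := hreg
  have hbool (h : ∀ u : Rˣ, (u : R) - 1 = 0) (x : R) : x ^ 2 = x :=
    have := Subsingleton.units_of_isUnit fun _ ha => sub_eq_zero.1 (h ha.unit)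
    (sq x).trans (hR.isIdempotentElem x)
  have hunit (h : ∀ x : R, x ^ 2 = x) (u : Rˣ) : (u : R) - 1 = 0 :=
    sub_eq_zero.2 <| (IsIdempotentElem.iff_eq_one_of_isUnit u.isUnit).1 <| (sq _).symm.trans (h u)
  tfae_have 1 → 4 := fun h => hbool fun u => hR.eq_zero_of_mem_delta (h u)
  tfae_have 2 → 4 := fun h => hbool fun u => hR.eq_zero_of_mem_jacobson (h u)
  tfae_have 3 → 4 := fun h =>
    have := hR.isReduced_of_forall_isNilpotent_sub_one h
    hbool fun u => (h u).eq_zero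
  tfae_have 4 → 1 := fun h u v => by rw [hunit h u, zero_add]; exact v.isUnit
  tfae_have 4 → 2 := fun h u => hunit h u ▸ Ideal.zero_mem _
  tfae_have 4 → 3 := fun h u => hunit h u ▸ IsNilpotent.zero
  tfae_finish
end

section
/- Let (R_i)_{i ∈ I} be a family of rings. The direct product ∏_{i ∈ I} R_i is a 2-ΔU ring if and only if each R_i is a 2-ΔU ring. -/
/-- A ring `R` is a 2-ΔU ring if every unit `u` satisfies `u ^ 2 - 1 ∈ Δ(R)`. -/
def Is2DeltaU (R : Type*) [Ring R] : Prop := ∀ u : Rˣ, (u : R) ^ 2 - 1 ∈ Delta R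
section

variable {I : Type*} {R : I → Type*}

lemma Pi.exists_units_apply_eq [∀ i, Monoid (R i)] (i : I) (u : (R i)ˣ) :
    ∃ U : (∀ j, R j)ˣ, (U : ∀ j, R j) i = u := by
  classical
  exact ⟨MulEquiv.piUnits.symm (Pi.mulSingle i u), by simp⟩

lemma mem_delta_pi_iff [∀ i, Ring (R i)] {r : ∀ i, R i} :
    r ∈ Delta (∀ i, R i) ↔ ∀ i, r i ∈ Delta (R i) := by
  constructor
  · intro hr i u
    obtain ⟨U, hU⟩ := Pi.exists_units_apply_eq i u
    simpa [hU] using (hr U).apply i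
  · intro hr U
    exact Pi.isUnit_iff.2 fun i => hr i (MulEquiv.piUnits U i)

end

theorem pi_is2DeltaU_iff {I : Type*} (R : I → Type*) [∀ i, Ring (R i)] :
    Is2DeltaU (∀ i, R i) ↔ ∀ i, Is2DeltaU (R i) := by
  constructor
  · intro h i u
    obtain ⟨U, hU⟩ := Pi.exists_units_apply_eq i u
    simpa [hU] using mem_delta_pi_iff.1 (h U) i
  · intro h U
    exact mem_delta_pi_iff.2 fun i => by simpa using h i (MulEquiv.piUnits U i)
end

section
/- Let f : R → T be a surjective ring homomorphism whose kernel is contained in J(R). Then R is a 2-ΔU ring if and only if T is a 2-ΔU ring. -/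
/-!
A surjection `f : R → T` whose kernel lies in `J(R)` reflects units: if `f r` is invertible with
inverse `f s`, then `r s` and `s r` lie in `1 + J(R)`, hence are units, so `r` has a left and a
right inverse. Thus `f` is a local homomorphism and maps `Rˣ` onto `Tˣ`, which makes both `Δ` and
the condition `u ^ 2 - 1 ∈ Δ` pass from `R` to `T` and back.
-/

theorem isUnit_of_isUnit_mul_of_isUnit_mul {M : Type*} [Monoid M] {a b : M}
    (hab : IsUnit (a * b)) (hba : IsUnit (b * a)) : IsUnit a := by
  obtain ⟨c, hc⟩ := hab.exists_right_inv
  obtain ⟨d, hd⟩ := hba.exists_left_inv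
  have hright : a * (b * c) = 1 := by rw [← mul_assoc, hc]
  have hleft : (d * b) * a = 1 := by rw [mul_assoc, hd]
  exact isUnit_iff_exists.2 ⟨b * c, hright, left_inv_eq_right_inv hleft hright ▸ hleft⟩

namespace Ideal

theorem isUnit_add_one_of_mem_jacobson_bot {R : Type*} [Ring R] {x : R}
    (hx : x ∈ jacobson (⊥ : Ideal R)) : IsUnit (x + 1) := by
  obtain ⟨s, hs⟩ := exists_mul_add_sub_mem_of_mem_jacobson x hx
  rw [mem_bot, sub_eq_zero] at hs
  have hs_sub_one : s - 1 ∈ jacobson (⊥ : Ideal R) := by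
    have : s - 1 = -(s * x) := by rw [← hs]; noncomm_ring
    exact this ▸ neg_mem (mul_mem_left _ s hx)
  obtain ⟨w, hw⟩ := exists_mul_sub_mem_of_sub_one_mem_jacobson s hs_sub_one
  rw [mem_bot, sub_eq_zero] at hw
  have hw_eq : w = x + 1 := left_inv_eq_right_inv hw hs
  exact isUnit_iff_exists.2 ⟨s, hw_eq ▸ hw, hs⟩

end Ideal

section

variable {R T : Type*} [Ring R] [Ring T]

theorem RingHom.isLocalHom_of_surjective_of_ker_le_jacobson (f : R →+* T)
    (hf : Function.Surjective f)
    (hker : ∀ x : R, f x = 0 → x ∈ Ideal.jacobson (⊥ : Ideal R)) : IsLocalHom f := by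
  refine ⟨fun r ⟨v, hv⟩ => ?_⟩
  obtain ⟨s, hs⟩ := hf ↑v⁻¹
  have isUnit_of_map_eq_one {a : R} (ha : f a = 1) : IsUnit a := by
    simpa using Ideal.isUnit_add_one_of_mem_jacobson_bot (hker (a - 1) (by simp [ha]))
  exact isUnit_of_isUnit_mul_of_isUnit_mul
    (isUnit_of_map_eq_one (a := r * s) (by simp [← hv, hs]))
    (isUnit_of_map_eq_one (a := s * r) (by simp [← hv, hs]))

theorem mem_delta_of_map_mem_delta (f : R →+* T) [IsLocalHom f] {r : R} (h : f r ∈ Delta T) :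
    r ∈ Delta R := fun u =>
  isUnit_of_map_unit f _ (by simpa using h (Units.map f u))

theorem map_mem_delta (f : R →+* T) [IsLocalHom f] (hf : Function.Surjective f) {r : R}
    (hr : r ∈ Delta R) : f r ∈ Delta T := by
  intro v
  obtain ⟨u, rfl⟩ := IsLocalRing.surjective_units_map_of_local_ringHom f hf ‹_› v
  simpa using (hr u).map f

theorem Is2DeltaU.of_isLocalHom (f : R →+* T) [IsLocalHom f] (h : Is2DeltaU T) :
    Is2DeltaU R := fun u =>
  mem_delta_of_map_mem_delta f (by simpa using h (Units.map f u))

theorem Is2DeltaU.of_surjective (f : R →+* T) [IsLocalHom f] (hf : Function.Surjective f)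
    (h : Is2DeltaU R) : Is2DeltaU T := by
  intro v
  obtain ⟨u, rfl⟩ := IsLocalRing.surjective_units_map_of_local_ringHom f hf ‹_› v
  simpa using map_mem_delta f hf (h u)

end

theorem is2DeltaU_iff_quotient {R T : Type*} [Ring R] [Ring T] (f : R →+* T)
    (hf : Function.Surjective f)
    (hker : ∀ x : R, f x = 0 → x ∈ Ideal.jacobson (⊥ : Ideal R)) :
    Is2DeltaU R ↔ Is2DeltaU T :=
  have := f.isLocalHom_of_surjective_of_ker_le_jacobson hf hker
  ⟨Is2DeltaU.of_surjective f hf, Is2DeltaU.of_isLocalHom f⟩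
end

section
/- A division ring R is a 2-ΔU ring if and only if R is isomorphic (as a ring) to ℤ/2ℤ or to ℤ/3ℤ. -/
theorem mem_delta_iff_eq_zero {R : Type*} [DivisionRing R] {r : R} : r ∈ Delta R ↔ r = 0 := by
  refine ⟨fun hr => ?_, fun hr u => by simp [hr]⟩
  by_contra h
  simpa using hr (Units.mk0 (-r) (neg_ne_zero.mpr h))

theorem is2DeltaU_iff_forall_sq_eq_one {R : Type*} [DivisionRing R] :
    Is2DeltaU R ↔ ∀ x : R, x ≠ 0 → x ^ 2 = 1 := by
  simp only [Is2DeltaU, mem_delta_iff_eq_zero, sub_eq_zero]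
  exact ⟨fun h x hx => h (Units.mk0 x hx), fun h u => h u u.ne_zero⟩

theorem forall_sq_eq_one_of_ringEquiv {R S : Type*} [Ring R] [Ring S] (e : R ≃+* S)
    (h : ∀ y : S, y ≠ 0 → y ^ 2 = 1) (x : R) (hx : x ≠ 0) : x ^ 2 = 1 :=
  e.injective <| by simpa using h (e x) (by simpa using hx)

section ForallSqEqOne

variable {R : Type*} [Ring R] [NoZeroDivisors R]

theorem eq_zero_or_eq_one_or_eq_neg_one_of_forall_sq_eq_one
    (h : ∀ x : R, x ≠ 0 → x ^ 2 = 1) (x : R) : x = 0 ∨ x = 1 ∨ x = -1 :=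
  (eq_or_ne x 0).imp_right fun hx => sq_eq_one_iff.mp (h x hx)

theorem intCast_surjective_of_forall_sq_eq_one (h : ∀ x : R, x ≠ 0 → x ^ 2 = 1) :
    Function.Surjective (Int.cast : ℤ → R) := by
  intro x
  rcases eq_zero_or_eq_one_or_eq_neg_one_of_forall_sq_eq_one h x with rfl | rfl | rfl
  exacts [⟨0, Int.cast_zero⟩, ⟨1, Int.cast_one⟩, ⟨-1, by simp⟩]

theorem two_eq_zero_or_three_eq_zero_of_forall_sq_eq_one [Nontrivial R]
    (h : ∀ x : R, x ≠ 0 → x ^ 2 = 1) : (2 : R) = 0 ∨ (3 : R) = 0 := by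
  rcases eq_zero_or_eq_one_or_eq_neg_one_of_forall_sq_eq_one h 2 with h2 | h2 | h2
  · exact Or.inl h2
  · exact absurd (add_eq_left.mp (one_add_one_eq_two.trans h2)) one_ne_zero
  · exact Or.inr (by rw [← two_add_one_eq_three, h2, neg_add_cancel])

end ForallSqEqOne

theorem ZMod.nonempty_ringEquiv_of_intCast_surjective {R : Type*} [Ring R] (n : ℕ) [CharP R n]
    (h : Function.Surjective (Int.cast : ℤ → R)) : Nonempty (R ≃+* ZMod n) := by
  refine ⟨(RingEquiv.ofBijective (ZMod.castHom dvd_rfl R) ⟨ZMod.castHom_injective R, ?_⟩).symm⟩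
  intro x
  obtain ⟨k, rfl⟩ := h x
  exact ⟨k, map_intCast _ k⟩

theorem divisionRing_is2DeltaU_iff (R : Type*) [DivisionRing R] :
    Is2DeltaU R ↔ (Nonempty (R ≃+* ZMod 2) ∨ Nonempty (R ≃+* ZMod 3)) := by
  rw [is2DeltaU_iff_forall_sq_eq_one]
  constructor
  · intro h
    have hsurj := intCast_surjective_of_forall_sq_eq_one h
    rcases two_eq_zero_or_three_eq_zero_of_forall_sq_eq_one h with h2 | h3
    · have : CharP R 2 := (CharP.charP_iff_prime_eq_zero Nat.prime_two).mpr (mod_cast h2)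
      exact Or.inl (ZMod.nonempty_ringEquiv_of_intCast_surjective 2 hsurj)
    · have : CharP R 3 := (CharP.charP_iff_prime_eq_zero Nat.prime_three).mpr (mod_cast h3)
      exact Or.inr (ZMod.nonempty_ringEquiv_of_intCast_surjective 3 hsurj)
  · rintro (⟨⟨e⟩⟩ | ⟨⟨e⟩⟩)
    exacts [forall_sq_eq_one_of_ringEquiv e (by decide),
      forall_sq_eq_one_of_ringEquiv e (by decide)]
end

section
/- Let R be a 2-ΔU ring and let S be a unital subring of R such that S ∩ Δ(R) ⊆ Δ(S), where Δ(S) = {s ∈ S : s + v is a unit of S for every unit v of S}. Then S is a 2-ΔU ring (i.e., every unit w of S satisfies w² - 1 ∈ Δ(S)). -/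
theorem Is2DeltaU.of_ringHom {S R : Type*} [Ring S] [Ring R] (f : S →+* R) (hR : Is2DeltaU R)
    (hf : ∀ s : S, f s ∈ Delta R → s ∈ Delta S) : Is2DeltaU S := by
  intro w
  apply hf
  simpa only [map_sub, map_pow, map_one, Units.coe_map, MonoidHom.coe_coe] using
    hR (Units.map f w)

theorem subring_is2DeltaU (R : Type*) [Ring R] (hR : Is2DeltaU R) (S : Subring R)
    (h : ∀ s : S, (s : R) ∈ Delta R → s ∈ Delta S) :
    Is2DeltaU S :=
  Is2DeltaU.of_ringHom S.subtype hR h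
end

section
/- For any nonzero ring R and any integer n ≥ 2, the matrix ring Mₙ(R) of n × n matrices over R is not a 2-ΔU ring. -/
/-!
In a 2-ΔU ring, `u ^ 2 - 1 + w` is a unit for all units `u` and `w`, so it is never a left
zero divisor. In `Mₙ(R)` with `n ≥ 2`, products of two elementary transvections give units `u`
and `w` for which `u ^ 2 - 1 + w` has a zero column.
-/

theorem not_is2DeltaU_of_mul_eq_zero {S : Type*} [Ring S] {u w c : S} (hu : IsUnit u)
    (hw : IsUnit w) (hc : c ≠ 0) (h : (u ^ 2 - 1 + w) * c = 0) : ¬ Is2DeltaU S :=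
  fun hS => hc <| (hS hu.unit hw.unit).mul_right_eq_zero.mp h

namespace Matrix

variable {ι R : Type*} [DecidableEq ι] [Ring R] {i j : ι}

theorem single_ne_zero (i j : ι) {c : R} (hc : c ≠ 0) : single i j c ≠ 0 :=
  fun h => hc <| by simpa using congr($h i j)

variable [Fintype ι]

theorem isNilpotent_single (hij : i ≠ j) (c : R) : IsNilpotent (single i j c) :=
  ⟨2, by simp [sq, hij.symm]⟩

theorem not_is2DeltaU [Nontrivial R] (hij : i ≠ j) : ¬ Is2DeltaU (Matrix ι ι R) := by
  -- On the coordinates `i, j`, `u = [[0, 1], [-1, 1]]` and `w = [[2, 1], [1, 1]]`, while both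
  -- are the identity on the others; so `u ^ 2 - 1 + w` has a vanishing `i`-th column.
  set u : Matrix ι ι R := (1 + single i j 1) * (1 - single j i 1)
  set w : Matrix ι ι R := (1 + single i j 1) * (1 + single j i 1)
  have hu : IsUnit u :=
    (isNilpotent_single hij 1).isUnit_one_add.mul (isNilpotent_single hij.symm 1).isUnit_one_sub
  have hw : IsUnit w :=
    (isNilpotent_single hij 1).isUnit_one_add.mul (isNilpotent_single hij.symm 1).isUnit_one_add
  refine not_is2DeltaU_of_mul_eq_zero hu hw (single_ne_zero i i one_ne_zero) ?_
  simp only [u, w, sq, add_mul, mul_add, sub_mul, mul_sub, one_mul, mul_one, zero_mul,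
    single_mul_single_same, single_mul_single_of_ne, hij, hij.symm, Ne, not_false_eq_true]
  abel

end Matrix

theorem matrixRing_not_is2DeltaU (R : Type*) [Ring R] [Nontrivial R] (n : ℕ) (hn : 2 ≤ n) :
    ¬ Is2DeltaU (Matrix (Fin n) (Fin n) R) :=
  Matrix.not_is2DeltaU (i := ⟨0, by omega⟩) (j := ⟨1, hn⟩) (by simp [Fin.ext_iff])
end

section
/- For an integer m ≥ 1, the ring ℤ/mℤ is a 2-ΔU ring if and only if m = 2^k · 3^l for some nonnegative integers k and l. -/
/-!
Units of `ℤ/2` and `ℤ/3` square to `1`, so modulo every prime factor of `2^k 3^l` the element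
`u² - 1 + v` reduces to the unit `v`; an element of `ℤ/m` that is a unit modulo every prime factor
of `m` is a unit. Conversely, a prime factor `p ≥ 5` of `m` gives a quotient `ℤ/p` in which `2` and
`-3` are units with `2² - 1 + (-3) = 0`, and the 2-ΔU property descends to `ℤ/p` because units of
`ℤ/p` lift to units of `ℤ/m`.
-/

theorem Is2DeltaU.of_surjective_unitsMap {R S : Type*} [Ring R] [Ring S] (f : R →+* S)
    (hf : Function.Surjective (Units.map (f : R →* S))) (h : Is2DeltaU R) : Is2DeltaU S := by
  intro u v
  obtain ⟨u', rfl⟩ := hf u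
  obtain ⟨v', rfl⟩ := hf v
  simpa using (h u' v').map f

theorem not_is2DeltaU_of_isUnit_two_of_isUnit_three {R : Type*} [Ring R] [Nontrivial R]
    (h2 : IsUnit (2 : R)) (h3 : IsUnit (3 : R)) : ¬ Is2DeltaU R := by
  intro h
  have hzero : (h2.unit : R) ^ 2 - 1 + (h3.neg.unit : R) = 0 := by
    simp only [IsUnit.unit_spec]
    norm_num
  exact not_isUnit_zero (hzero ▸ h h2.unit h3.neg.unit)

theorem ZMod.isUnit_of_forall_prime_dvd {m : ℕ} [NeZero m] (x : ZMod m)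
    (h : ∀ p, p.Prime → (hpm : p ∣ m) → IsUnit (ZMod.castHom hpm (ZMod p) x)) : IsUnit x := by
  rw [← ZMod.natCast_zmod_val x, ZMod.isUnit_iff_coprime]
  refine Nat.coprime_of_dvd fun p hp hpx hpm => ?_
  have hzero : ZMod.castHom hpm (ZMod p) x = 0 := by
    rw [← ZMod.natCast_zmod_val x, map_natCast, ZMod.natCast_eq_zero_iff]
    exact hpx
  have : Fact p.Prime := ⟨hp⟩
  exact not_isUnit_zero (hzero ▸ h p hp hpm)

theorem ZMod.sq_eq_one_of_isUnit_of_eq_two_or_three {p : ℕ} (hp : p = 2 ∨ p = 3) :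
    ∀ a : ZMod p, IsUnit a → a ^ 2 = 1 := by
  rcases hp with rfl | rfl <;> decide

theorem ZMod.is2DeltaU_of_forall_prime_dvd {m : ℕ} [NeZero m]
    (hm : ∀ p, p.Prime → p ∣ m → p = 2 ∨ p = 3) : Is2DeltaU (ZMod m) := by
  intro u v
  refine ZMod.isUnit_of_forall_prime_dvd _ fun p hp hpm => ?_
  have hu : (ZMod.castHom hpm (ZMod p) u) ^ 2 = 1 :=
    ZMod.sq_eq_one_of_isUnit_of_eq_two_or_three (hm p hp hpm) _ (u.isUnit.map _)
  simpa only [map_add, map_sub, map_pow, map_one, hu, sub_self, zero_add] using v.isUnit.map _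

theorem ZMod.eq_two_or_three_of_prime_dvd_of_is2DeltaU {m : ℕ} [NeZero m]
    (h : Is2DeltaU (ZMod m)) {p : ℕ} (hp : p.Prime) (hpm : p ∣ m) : p = 2 ∨ p = 3 := by
  by_contra! hp23
  have : Fact p.Prime := ⟨hp⟩
  have hunit (q : ℕ) (hq : q.Prime) (hqp : q ≠ p) : IsUnit (q : ZMod p) :=
    (ZMod.isUnit_prime_iff_not_dvd hq).mpr fun hqp' =>
      hqp ((Nat.prime_dvd_prime_iff_eq hq hp).mp hqp')
  refine not_is2DeltaU_of_isUnit_two_of_isUnit_three (R := ZMod p) ?_ ?_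
    (h.of_surjective_unitsMap _ (ZMod.unitsMap_surjective hpm))
  · exact_mod_cast hunit 2 Nat.prime_two hp23.1.symm
  · exact_mod_cast hunit 3 Nat.prime_three hp23.2.symm

theorem Nat.exists_eq_two_pow_mul_three_pow_iff {m : ℕ} (hm : m ≠ 0) :
    (∃ k l : ℕ, m = 2 ^ k * 3 ^ l) ↔ ∀ p, p.Prime → p ∣ m → p = 2 ∨ p = 3 := by
  constructor
  · rintro ⟨k, l, rfl⟩ p hp hpm
    rcases (Nat.Prime.dvd_mul hp).mp hpm with h2 | h3
    · exact Or.inl ((Nat.prime_dvd_prime_iff_eq hp Nat.prime_two).mp (hp.dvd_of_dvd_pow h2))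
    · exact Or.inr ((Nat.prime_dvd_prime_iff_eq hp Nat.prime_three).mp (hp.dvd_of_dvd_pow h3))
  · intro h
    have hsupp : m.factorization.support ⊆ {2, 3} := fun p hp => by
      have hp' := Nat.support_factorization m ▸ hp
      simpa using h p (Nat.prime_of_mem_primeFactors hp') (Nat.dvd_of_mem_primeFactors hp')
    refine ⟨m.factorization 2, m.factorization 3, ?_⟩
    conv_lhs => rw [← Nat.prod_factorization_pow_eq_self hm]
    rw [Finsupp.prod_of_support_subset _ hsupp _ (by simp)]
    simp

theorem zmod_is2DeltaU_iff (m : ℕ) (hm : 1 ≤ m) :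
    Is2DeltaU (ZMod m) ↔ ∃ k l : ℕ, m = 2 ^ k * 3 ^ l := by
  have : NeZero m := ⟨by omega⟩
  rw [Nat.exists_eq_two_pow_mul_three_pow_iff (NeZero.ne m)]
  exact ⟨fun h _ => ZMod.eq_two_or_three_of_prime_dvd_of_is2DeltaU h,
    ZMod.is2DeltaU_of_forall_prime_dvd⟩
end

section
/- Let R be a 2-ΔU ring with J(R) = 0 such that every nonzero right ideal of R contains a nonzero idempotent (equivalently, for every nonzero a ∈ R there is a nonzero idempotent e lying in the right ideal aR). Then R is reduced. -/
/-!
A nonzero square-zero element `x` yields, through an idempotent `f ∈ xR`, a system of `2 × 2`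
matrix units `e₀₀ = f, e₀₁, e₁₀, e₁₁` in `R`. In the corner they span, which looks like `M₂`,
the unit `u = e₀₁ - e₁₀ - e₁₁` (completed by `1 - e₀₀ - e₁₁`) and the unipotent `1 + n`,
`n = e₀₀ + e₀₁ - e₁₀ - e₁₁`, have `u² - 1 + (1 + n) = 1 - e₀₀ - 2e₁₁ =: r` with `r e₀₀ = 0`.
The 2-ΔU condition makes `r` a unit, so `f = e₀₀ = 0`, a contradiction.
-/

def IsMatrixUnits {R ι : Type*} [Ring R] [DecidableEq ι] (e : ι → ι → R) : Prop :=
  ∀ i j k l, e i j * e k l = if j = k then e i l else 0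

theorem isMatrixUnits_of_mul_mul_eq_self {R : Type*} [Ring R] {a b : R} (haba : a * b * a = a)
    (hbab : b * a * b = b) (haa : a * a = 0) (hbb : b * b = 0) :
    IsMatrixUnits ![![a * b, a], ![b, b * a]] := by
  have haa' (c : R) : a * (a * c) = 0 := by rw [← mul_assoc, haa, zero_mul]
  have hbb' (c : R) : b * (b * c) = 0 := by rw [← mul_assoc, hbb, zero_mul]
  rw [mul_assoc] at haba hbab
  intro i j k l
  fin_cases i <;> fin_cases j <;> fin_cases k <;> fin_cases l <;>
    simp [mul_assoc, haa, hbb, haa', hbb', haba, hbab]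

theorem exists_isMatrixUnits_of_mul_self_eq_zero {R : Type*} [Ring R] {x f t : R}
    (hx : x * x = 0) (hf : IsIdempotentElem f) (hft : f = x * t) :
    ∃ e : Fin 2 → Fin 2 → R, IsMatrixUnits e ∧ e 0 0 = f := by
  have hxf : x * f = 0 := by rw [hft, ← mul_assoc, hx, zero_mul]
  have hff : f * f = f := hf
  have hf_sub : f * (1 - f) = 0 := by rw [mul_sub, mul_one, hff, sub_self]
  have hab : f * x * ((1 - f) * t * f) = f := by
    calc f * x * ((1 - f) * t * f) = f * (x * t) * f - f * (x * f) * (t * f) := by noncomm_ring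
      _ = f := by rw [← hft, hxf, hff, hff, mul_zero, zero_mul, sub_zero]
  refine ⟨_, isMatrixUnits_of_mul_mul_eq_self ?_ ?_ ?_ ?_, hab⟩
  · rw [hab, ← mul_assoc, hff]
  · rw [mul_assoc, hab, mul_assoc, hff]
  · rw [mul_assoc, ← mul_assoc x, hxf, zero_mul, mul_zero]
  · calc (1 - f) * t * f * ((1 - f) * t * f) = (1 - f) * t * (f * (1 - f)) * t * f := by
          noncomm_ring
      _ = 0 := by rw [hf_sub, mul_zero, zero_mul, zero_mul]

theorem Is2DeltaU.matrixUnit_eq_zero {R : Type*} [Ring R] (hR : Is2DeltaU R)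
    {e : Fin 2 → Fin 2 → R} (he : IsMatrixUnits e) : e 0 0 = 0 := by
  set u : R := e 0 1 - e 1 0 - e 1 1 + (1 - (e 0 0 + e 1 1))
  set u' : R := e 1 0 - e 0 0 - e 0 1 + (1 - (e 0 0 + e 1 1))
  set n : R := e 0 0 + e 0 1 - e 1 0 - e 1 1
  have huu' : u * u' = 1 := by
    simp only [u, u', mul_add, mul_sub, add_mul, sub_mul, one_mul, mul_one, he _ _ _ _,
      ↓reduceIte, zero_ne_one, one_ne_zero]
    abel
  have hu'u : u' * u = 1 := by
    simp only [u, u', mul_add, mul_sub, add_mul, sub_mul, one_mul, mul_one, he _ _ _ _,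
      ↓reduceIte, zero_ne_one, one_ne_zero]
    abel
  have hnn : n * n = 0 := by
    simp only [n, mul_add, mul_sub, add_mul, sub_mul, he _ _ _ _, ↓reduceIte, zero_ne_one,
      one_ne_zero]
    abel
  have hv : IsUnit (1 + n) := IsNilpotent.isUnit_one_add ⟨2, by rw [pow_two, hnn]⟩
  have hsum : u ^ 2 - 1 + (1 + n) = 1 - e 0 0 - (e 1 1 + e 1 1) := by
    simp only [u, n, pow_two, mul_add, mul_sub, add_mul, sub_mul, one_mul, mul_one, he _ _ _ _,
      ↓reduceIte, zero_ne_one, one_ne_zero]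
    abel
  obtain ⟨c, hc⟩ := (hR ⟨u, u', huu', hu'u⟩ hv.unit).exists_left_inv
  rw [IsUnit.unit_spec, hsum] at hc
  calc e 0 0 = c * ((1 - e 0 0 - (e 1 1 + e 1 1)) * e 0 0) := by rw [← mul_assoc, hc, one_mul]
    _ = 0 := by simp [sub_mul, add_mul, he _ _ _ _]

theorem is2DeltaU_reduced_general (R : Type*) [Ring R] (hR : Is2DeltaU R)
    (hid : ∀ a : R, a ≠ 0 → ∃ e : R, e ≠ 0 ∧ e * e = e ∧ ∃ r : R, e = a * r) :
    IsReduced R := by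
  refine (isReduced_iff_pow_one_lt 2 one_lt_two).mpr fun x hx => ?_
  by_contra hx0
  obtain ⟨f, hf0, hff, t, hft⟩ := hid x hx0
  obtain ⟨e, he, rfl⟩ := exists_isMatrixUnits_of_mul_self_eq_zero (pow_two x ▸ hx) hff hft
  exact hf0 (hR.matrixUnit_eq_zero he)

theorem is2DeltaU_reduced (R : Type*) [Ring R] (hR : Is2DeltaU R)
    (hJ : Ideal.jacobson (⊥ : Ideal R) = ⊥)
    (hid : ∀ a : R, a ≠ 0 → ∃ e : R, e ≠ 0 ∧ e * e = e ∧ ∃ r : R, e = a * r) :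
    IsReduced R :=
  is2DeltaU_reduced_general R hR hid
end

section
/- For a ring R the following are equivalent: (i) R is a von Neumann regular 2-ΔU ring; (ii) R is a strongly regular 2-ΔU ring; (iii) R is a unit-regular 2-ΔU ring; (iv) R satisfies the identity x³ = x for all x ∈ R. -/
def IsStronglyRegular (R : Type*) [Ring R] : Prop := ∀ a : R, ∃ x : R, a = a ^ 2 * x

def IsUnitRegular (R : Type*) [Ring R] : Prop := ∀ a : R, ∃ u : Rˣ, a = a * (u : R) * a

section

variable {R : Type*} [Ring R]

theorem zero_mem_Delta : (0 : R) ∈ Delta R := fun u => by simp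

theorem IsIdempotentElem.commute_of_isReduced_s15 [IsReduced R] {e : R} (he : IsIdempotentElem e)
    (r : R) : Commute e r := by
  have he' : ∀ s : R, e * (e * s) = e * s := fun s => by rw [← mul_assoc, he.eq]
  have hl : (e * r - e * r * e) ^ 2 = 0 := by
    simp only [sq, mul_sub, sub_mul, mul_assoc, he']; abel
  have hr : (r * e - e * r * e) ^ 2 = 0 := by
    simp only [sq, mul_sub, sub_mul, mul_assoc, he']; abel
  rw [pow_eq_zero_iff two_ne_zero, sub_eq_zero] at hl hr
  exact hl.trans hr.symm

theorem commute_of_mul_mul_eq_self [IsReduced R] {a x : R} (h : a * x * a = a) :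
    Commute a x := by
  have hax : Commute (a * x) a :=
    IsIdempotentElem.commute_of_isReduced_s15 (by rw [IsIdempotentElem, ← mul_assoc, h]) a
  have hxa : Commute (x * a) a :=
    IsIdempotentElem.commute_of_isReduced_s15
      (by rw [IsIdempotentElem, mul_assoc, ← mul_assoc a, h]) a
  calc a * x = a * (x * a) * x := by rw [← mul_assoc, h]
    _ = x * (a * (a * x)) := by rw [← hxa.eq]; simp only [mul_assoc]
    _ = x * a := by rw [← hax.eq, h]

theorem IsVonNeumannRegular.exists_reflexive_inverse (hR : IsVonNeumannRegular R) (a : R) :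
    ∃ y : R, a * y * a = a ∧ y * a * y = y := by
  obtain ⟨x, hx⟩ := hR a
  have hx' : ∀ r, a * (x * (a * r)) = a * r := fun r => by
    rw [← mul_assoc, ← mul_assoc, ← hx]
  refine ⟨x * a * x, ?_, by simp only [mul_assoc, hx']⟩
  simp only [mul_assoc, hx']
  rw [← mul_assoc, ← hx]

theorem add_one_sub_mul_mul_add_one_sub_mul {a y : R} (hc : Commute a y) (h₁ : a * y * a = a)
    (h₂ : y * a * y = y) : (a + (1 - a * y)) * (y + (1 - a * y)) = 1 := by
  set e := a * y with he
  have hae : a * e = a := by rw [he, hc.eq, ← mul_assoc, h₁]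
  have hey : e * y = y := by rw [he, hc.eq, h₂]
  have hee : e * e = e := by rw [he, ← mul_assoc, h₁]
  simp only [mul_add, add_mul, mul_sub, sub_mul, one_mul, mul_one, hae, hey, hee, ← he]
  abel

theorem isUnit_add_one_sub_mul_of_commute {a y : R} (hc : Commute a y) (h₁ : a * y * a = a)
    (h₂ : y * a * y = y) : IsUnit (a + (1 - a * y)) :=
  ⟨⟨_, y + (1 - a * y), add_one_sub_mul_mul_add_one_sub_mul hc h₁ h₂,
    by rw [hc.eq]; exact add_one_sub_mul_mul_add_one_sub_mul hc.symm h₂ h₁⟩, rfl⟩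

theorem IsVonNeumannRegular.exists_isUnit_add_one_sub_mul [IsReduced R]
    (hR : IsVonNeumannRegular R) (a : R) :
    ∃ y : R, a * y * a = a ∧ Commute a y ∧ IsUnit (a + (1 - a * y)) := by
  obtain ⟨y, h₁, h₂⟩ := hR.exists_reflexive_inverse a
  have hc := commute_of_mul_mul_eq_self h₁
  exact ⟨y, h₁, hc, isUnit_add_one_sub_mul_of_commute hc h₁ h₂⟩

theorem IsVonNeumannRegular.eq_zero_of_mem_Delta [IsReduced R] (hR : IsVonNeumannRegular R)
    {d : R} (hd : d ∈ Delta R) : d = 0 := by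
  obtain ⟨y, hy, -, ⟨u, hu⟩⟩ := hR.exists_isUnit_add_one_sub_mul d
  have hunit : IsUnit (-(1 - d * y)) := by simpa [hu] using hd (-u)
  have he : d * y = 0 := by
    rw [← hunit.mul_right_eq_zero, neg_mul, sub_mul, one_mul, ← mul_assoc, hy, sub_self,
      neg_zero]
  rw [← hy, he, zero_mul]

theorem IsVonNeumannRegular.pow_three_eq_self [IsReduced R] (hR : IsVonNeumannRegular R)
    (hu : ∀ u : Rˣ, (u : R) ^ 2 = 1) (a : R) : a ^ 3 = a := by
  obtain ⟨y, hy, hc, ⟨u, hu'⟩⟩ := hR.exists_isUnit_add_one_sub_mul a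
  have hau : a * u = a ^ 2 := by
    rw [hu', mul_add, mul_sub, mul_one, ← mul_assoc, mul_assoc a a y, hc.eq, ← mul_assoc, hy,
      sub_self, add_zero, sq]
  symm
  calc a = a * u ^ 2 := by rw [hu, mul_one]
    _ = a ^ 2 * u := by rw [sq (u : R), ← mul_assoc, hau]
    _ = a * (a * u) := by rw [sq, mul_assoc]
    _ = a ^ 3 := by rw [hau, ← pow_succ']

theorem exists_sq_eq_zero_reflexive_inverse {a b : R} (ha : a ^ 2 = 0) (h₁ : a * b * a = a)
    (h₂ : b * a * b = b) : ∃ t : R, t ^ 2 = 0 ∧ a * t * a = a ∧ t * a * t = t := by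
  have haa : ∀ r, a * (a * r) = 0 := fun r => by rw [← mul_assoc, ← sq, ha, zero_mul]
  have hbab : ∀ r, b * (a * (b * r)) = b * r := fun r => by simp only [← mul_assoc, h₂]
  simp only [mul_assoc] at h₁ h₂
  refine ⟨b - a * b * b, ?_, ?_, ?_⟩ <;>
    simp only [sq, mul_sub, sub_mul, mul_assoc, mul_zero, zero_mul, haa, hbab, h₁, h₂] <;> abel

/-- `s`, `t`, `s * t`, `t * s` behave like the matrix units `e₁₂`, `e₂₁`, `e₁₁`, `e₂₂`. The unit
`U = 1 + s - t - t * s` is `[[1, 1], [-1, 0]]` on that corner, and `e₁₁` annihilates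
`U ^ 2 - 1 + (1 - s)`, which the 2-ΔU condition makes a unit. -/
theorem Is2DeltaU.eq_zero_of_sq_eq_zero (h : Is2DeltaU R) {s t : R} (hs : s ^ 2 = 0)
    (ht : t ^ 2 = 0) (hsts : s * t * s = s) (htst : t * s * t = t) : s = 0 := by
  have hss : ∀ r, s * (s * r) = 0 := fun r => by rw [← mul_assoc, ← sq, hs, zero_mul]
  have htt : ∀ r, t * (t * r) = 0 := fun r => by rw [← mul_assoc, ← sq, ht, zero_mul]
  rw [sq] at hs ht
  simp only [mul_assoc] at hsts htst
  obtain ⟨hU₁, hU₂, hV₁, hV₂, hkey⟩ :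
      (1 + s - t - t * s) * (1 - s + t - s * t) = 1 ∧
      (1 - s + t - s * t) * (1 + s - t - t * s) = 1 ∧
      (1 - s) * (1 + s) = 1 ∧ (1 + s) * (1 - s) = 1 ∧
      s * t * ((1 + s - t - t * s) ^ 2 - 1 + (1 - s)) = 0 := by
    refine ⟨?_, ?_, ?_, ?_, ?_⟩ <;>
      simp only [sq, mul_add, add_mul, mul_sub, sub_mul, one_mul, mul_one, mul_zero, mul_assoc,
        hs, ht, hss, htt, hsts, htst] <;>
      abel
  have hunit : IsUnit ((1 + s - t - t * s) ^ 2 - 1 + (1 - s)) :=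
    h ⟨_, _, hU₁, hU₂⟩ ⟨_, _, hV₁, hV₂⟩
  rw [hunit.mul_left_eq_zero] at hkey
  rw [← hsts, ← mul_assoc, hkey, zero_mul]

theorem IsVonNeumannRegular.isReduced (hR : IsVonNeumannRegular R) (h : Is2DeltaU R) :
    IsReduced R := by
  refine (isReduced_iff_pow_one_lt 2 one_lt_two).2 fun a ha => ?_
  obtain ⟨b, h₁, h₂⟩ := hR.exists_reflexive_inverse a
  obtain ⟨t, ht, h₁', h₂'⟩ := exists_sq_eq_zero_reflexive_inverse ha h₁ h₂
  exact h.eq_zero_of_sq_eq_zero ha ht h₁' h₂'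

theorem IsVonNeumannRegular.pow_three_eq_self_of_is2DeltaU (hR : IsVonNeumannRegular R)
    (h : Is2DeltaU R) (a : R) : a ^ 3 = a :=
  have := hR.isReduced h
  hR.pow_three_eq_self (fun u => sub_eq_zero.1 (hR.eq_zero_of_mem_Delta (h u))) a

theorem IsStronglyRegular.isReduced (hR : IsStronglyRegular R) : IsReduced R :=
  (isReduced_iff_pow_one_lt 2 one_lt_two).2 fun a ha => by
    obtain ⟨x, hx⟩ := hR a
    rw [hx, ha, zero_mul]

theorem IsStronglyRegular.isVonNeumannRegular (hR : IsStronglyRegular R) :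
    IsVonNeumannRegular R := by
  have := hR.isReduced
  intro a
  obtain ⟨x, hx⟩ := hR a
  have hx' : ∀ r, a * (a * (x * r)) = a * r := fun r => by
    rw [← mul_assoc, ← mul_assoc, ← sq, ← hx]
  refine ⟨x, (sub_eq_zero.1 <| pow_eq_zero_iff two_ne_zero |>.1 ?_).symm⟩
  simp only [sq, mul_sub, sub_mul, mul_assoc, hx']
  abel

theorem IsUnitRegular.isVonNeumannRegular (hR : IsUnitRegular R) : IsVonNeumannRegular R :=
  fun a => let ⟨u, hu⟩ := hR a; ⟨u, hu⟩

theorem is2DeltaU_of_pow_three_eq_self (h : ∀ x : R, x ^ 3 = x) : Is2DeltaU R := by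
  intro u
  have : (u : R) ^ 2 = 1 :=
    calc (u : R) ^ 2 = u ^ 3 * ↑u⁻¹ := by
          rw [pow_succ (u : R) 2, mul_assoc, Units.mul_inv, mul_one]
      _ = 1 := by rw [h, Units.mul_inv]
  rw [this, sub_self]
  exact zero_mem_Delta

theorem isStronglyRegular_of_pow_three_eq_self (h : ∀ x : R, x ^ 3 = x) : IsStronglyRegular R :=
  fun a => ⟨a, by rw [← pow_succ, h]⟩

theorem isUnitRegular_of_pow_three_eq_self (h : ∀ x : R, x ^ 3 = x) : IsUnitRegular R := by
  intro a
  have h₄ : a ^ 4 = a ^ 2 := by rw [pow_succ, h, ← sq]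
  have hv : (a + (1 - a ^ 2)) * (a + (1 - a ^ 2)) = 1 := by
    rw [show (a + (1 - a ^ 2)) * (a + (1 - a ^ 2)) = 1 + 2 * (a - a ^ 3) + (a ^ 4 - a ^ 2) by
      noncomm_ring, h, h₄]
    simp
  refine ⟨⟨_, _, hv, hv⟩, ?_⟩
  rw [show a * (a + (1 - a ^ 2)) * a = a ^ 3 + (a ^ 2 - a ^ 4) by noncomm_ring, h, h₄]
  simp

end

theorem regular_is2DeltaU_tfae' (R : Type*) [Ring R] :
    List.TFAE
      [(∀ a : R, ∃ x : R, a = a * x * a) ∧ Is2DeltaU R,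
       (∀ a : R, ∃ x : R, a = a ^ 2 * x) ∧ Is2DeltaU R,
       (∀ a : R, ∃ u : Rˣ, a = a * (u : R) * a) ∧ Is2DeltaU R,
       ∀ x : R, x ^ 3 = x] := by
  tfae_have 1 → 4 := fun ⟨hR, h⟩ => IsVonNeumannRegular.pow_three_eq_self_of_is2DeltaU hR h
  tfae_have 4 → 3 := fun h =>
    ⟨isUnitRegular_of_pow_three_eq_self h, is2DeltaU_of_pow_three_eq_self h⟩
  tfae_have 3 → 1 := fun ⟨hR, h⟩ => ⟨IsUnitRegular.isVonNeumannRegular hR, h⟩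
  tfae_have 4 → 2 := fun h =>
    ⟨isStronglyRegular_of_pow_three_eq_self h, is2DeltaU_of_pow_three_eq_self h⟩
  tfae_have 2 → 1 := fun ⟨hR, h⟩ => ⟨IsStronglyRegular.isVonNeumannRegular hR, h⟩
  tfae_finish
end

section
/- Let R be a ring and M an (R,R)-bimodule. The trivial extension T(R, M) = {(r, m) : r ∈ R, m ∈ M}, with componentwise addition and multiplication (r, m)(s, n) = (rs, rn + ms), is a 2-ΔU ring if and only if R is a 2-ΔU ring. -/
section IsLocalHom

variable {A B F : Type*} [Ring A] [Ring B] [FunLike F A B] [RingHomClass F A B]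

theorem mem_delta_of_map_mem (f : F) [IsLocalHom f] {a : A} (h : f a ∈ Delta B) :
    a ∈ Delta A := fun u =>
  (isUnit_map_iff f _).mp (by simpa using h (Units.map (f : A →* B) u))

theorem Is2DeltaU.of_isLocalHom_s19 (f : F) [IsLocalHom f] (h : Is2DeltaU B) : Is2DeltaU A :=
  fun u => mem_delta_of_map_mem f (by simpa using h (Units.map (f : A →* B) u))

end IsLocalHom

namespace TrivSqZeroExt

variable (R M : Type*) [Ring R] [AddCommGroup M] [Module R M] [Module Rᵐᵒᵖ M]
  [SMulCommClass R Rᵐᵒᵖ M]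

instance isLocalHom_inlHom : IsLocalHom (inlHom R M) := ⟨fun _ => isUnit_inl_iff.mp⟩

instance isLocalHom_fstHom : IsLocalHom (fstHom ℕ R M) := ⟨fun _ => isUnit_iff_isUnit_fst.mpr⟩

end TrivSqZeroExt

theorem trivSqZeroExt_is2DeltaU_iff (R M : Type*) [Ring R] [AddCommGroup M]
    [Module R M] [Module Rᵐᵒᵖ M] [SMulCommClass R Rᵐᵒᵖ M] :
    Is2DeltaU (TrivSqZeroExt R M) ↔ Is2DeltaU R :=
  ⟨.of_isLocalHom (TrivSqZeroExt.inlHom R M), .of_isLocalHom (TrivSqZeroExt.fstHom ℕ R M)⟩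
end
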